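/- Let U ∈ ℂ^{n×2} have orthonormal columns (U^H U = I₂), let u₁, …, u_n be its rows, and let wᵢ = p(uᵢ) be their Hopf images, where p(a, b) = (āb + a b̄, i(āb − a b̄), |a|² − |b|²). Then ∑ᵢ wᵢ = 0 and ∑ᵢ |wᵢ| = 2. -/

import Mathlib

open Matrix

/-- The Hopf map `p : ℂ² → ℝ³`,
`p(a, b) = (āb + ab̄, i(āb − ab̄), |a|² − |b|²)`. -/
noncomputable def hopf (u : EuclideanSpace ℂ (Fin 2)) : EuclideanSpace ℝ (Fin 3) :=
  (WithLp.equiv 2 (Fin 3 → ℝ)).symm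
    ![((starRingEnd ℂ) (u 0) * u 1 + u 0 * (starRingEnd ℂ) (u 1)).re,
      (Complex.I * ((starRingEnd ℂ) (u 0) * u 1 - u 0 * (starRingEnd ℂ) (u 1))).re,
      ‖u 0‖ ^ 2 - ‖u 1‖ ^ 2]

lemma hopf_norm (u : EuclideanSpace ℂ (Fin 2)) :
    ‖hopf u‖ = ‖u 0‖ ^ 2 + ‖u 1‖ ^ 2 := by
  rw [EuclideanSpace.norm_eq]
  rw [show Real.sqrt (∑ i, ‖hopf u i‖ ^ 2) = Real.sqrt ((‖u 0‖ ^ 2 + ‖u 1‖ ^ 2) ^ 2) from ?_,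
    Real.sqrt_sq (by positivity)]
  congr 1
  simp [hopf, Fin.sum_univ_three, ← Complex.sq_norm, Complex.normSq_apply,
    Complex.mul_re, Complex.mul_im, Complex.sub_re, Complex.sub_im, Complex.sq_norm]
  ring

/-- If `U ∈ ℂ^{n×2}` has orthonormal columns and `wᵢ` are the Hopf images
of its rows, then `∑ wᵢ = 0` and `∑ ‖wᵢ‖ = 2`. -/
theorem hopf_images_sum_zero_perimeter_two
    (n : ℕ) (U : Matrix (Fin n) (Fin 2) ℂ) (hU : Uᴴ * U = 1) :
    (∑ i, hopf ((WithLp.equiv 2 (Fin 2 → ℂ)).symm (U i)) = 0) ∧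
      (∑ i, ‖hopf ((WithLp.equiv 2 (Fin 2 → ℂ)).symm (U i))‖ = 2) := by
  have h01 : ∑ i, (starRingEnd ℂ) (U i 0) * U i 1 = 0 := by
    have := congrFun (congrFun hU 0) 1
    simpa [Matrix.mul_apply, Matrix.conjTranspose_apply, Matrix.one_apply] using this
  have h00 : ∑ i, ‖U i 0‖ ^ 2 = 1 := by
    have := congrFun (congrFun hU 0) 0
    simp only [Matrix.mul_apply, Matrix.conjTranspose_apply, Matrix.one_apply_eq] at this
    have := congrArg Complex.re this
    simpa [Complex.re_sum, Complex.mul_re, Complex.sq_norm,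
      Complex.normSq_apply] using this
  have h11 : ∑ i, ‖U i 1‖ ^ 2 = 1 := by
    have := congrFun (congrFun hU 1) 1
    simp only [Matrix.mul_apply, Matrix.conjTranspose_apply, Matrix.one_apply_eq] at this
    have := congrArg Complex.re this
    simpa [Complex.re_sum, Complex.mul_re, Complex.sq_norm,
      Complex.normSq_apply] using this
  have hre : ∑ i, ((starRingEnd ℂ) (U i 0) * U i 1).re = 0 := by
    have := congrArg Complex.re h01
    simpa [Complex.re_sum] using this
  have him : ∑ i, ((starRingEnd ℂ) (U i 0) * U i 1).im = 0 := by
    have := congrArg Complex.im h01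
    simpa [Complex.im_sum] using this
  constructor
  · ext j
    rw [WithLp.ofLp_sum, WithLp.ofLp_zero, Finset.sum_apply]
    fin_cases j
    · calc ∑ i, hopf ((WithLp.equiv 2 (Fin 2 → ℂ)).symm (U i)) 0
          = 2 * ∑ i, ((starRingEnd ℂ) (U i 0) * U i 1).re := by
            rw [Finset.mul_sum]
            refine Finset.sum_congr rfl fun i _ => ?_
            simp [hopf, Complex.add_re, Complex.mul_re, Complex.conj_re, Complex.conj_im]
            ring
        _ = 0 := by rw [hre]; ring
    · calc ∑ i, hopf ((WithLp.equiv 2 (Fin 2 → ℂ)).symm (U i)) 1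
          = -2 * ∑ i, ((starRingEnd ℂ) (U i 0) * U i 1).im := by
            rw [Finset.mul_sum]
            refine Finset.sum_congr rfl fun i _ => ?_
            simp [hopf, Complex.mul_re, Complex.mul_im, Complex.sub_re, Complex.sub_im,
              Complex.conj_re, Complex.conj_im]
            ring
        _ = 0 := by rw [him]; ring
    · calc ∑ i, hopf ((WithLp.equiv 2 (Fin 2 → ℂ)).symm (U i)) 2
          = (∑ i, ‖U i 0‖ ^ 2) - ∑ i, ‖U i 1‖ ^ 2 := by
            rw [← Finset.sum_sub_distrib]
            refine Finset.sum_congr rfl fun i _ => ?_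
            simp [hopf]
        _ = 0 := by rw [h00, h11]; ring
  · calc ∑ i, ‖hopf ((WithLp.equiv 2 (Fin 2 → ℂ)).symm (U i))‖
        = (∑ i, ‖U i 0‖ ^ 2) + ∑ i, ‖U i 1‖ ^ 2 := by
          rw [← Finset.sum_add_distrib]
          refine Finset.sum_congr rfl fun i _ => ?_
          rw [hopf_norm]
          rfl
      _ = 2 := by rw [h00, h11]; norm_num
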